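/- arXiv:2210.01078 — 2 statements merged into one kernel-verified Lean document; each statement's English description precedes it below -/
import Mathlib

section
/- Let c(A) = argmin_χ Σ_{σ∈A} d_τ(χ, σ) denote a central (Kemeny) permutation of a multiset A, f′(A) = (1/|A|)·Σ_{σ∈A} d_τ(c(A), σ), and EI′(σ) = f′(S) − f′(S \ σ). Let S = {σ_1, ..., σ_{M−2}, σ_ok, σ_bad} with ground-truth permutation σ*. Assume d_τ(σ*, σ_ok) < r, d_τ(σ*, σ_bad) > 3r, and d_τ(c(S \ σ), σ*) < r for every σ ∈ S. Then EI′(σ_bad) > EI′(σ_ok). -/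
/-- Kendall tau distance: number of pairwise disagreements between two rankings. -/
def kendallDist {N : ℕ} (σ π : Equiv.Perm (Fin N)) : ℕ :=
  (Finset.univ.filter (fun p : Fin N × Fin N =>
    p.1 < p.2 ∧ ((σ p.1 < σ p.2 ∧ π p.2 < π p.1) ∨ (σ p.2 < σ p.1 ∧ π p.1 < π p.2)))).card

/-- `c` is a central (Kemeny) permutation of the multiset `A`: it minimizes the total
Kendall tau distance to the members of `A`. -/
def IsKemenyCentral {N : ℕ} (A : Multiset (Equiv.Perm (Fin N))) (c : Equiv.Perm (Fin N)) :
    Prop :=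
  ∀ χ : Equiv.Perm (Fin N),
    (A.map (fun σ => kendallDist c σ)).sum ≤ (A.map (fun σ => kendallDist χ σ)).sum


lemma kendallDist_symm {N : ℕ} (σ π : Equiv.Perm (Fin N)) :
    kendallDist σ π = kendallDist π σ := by
  unfold kendallDist
  congr 1
  ext p
  simp only [Finset.mem_filter]
  tauto

lemma kendallDist_triangle {N : ℕ} (σ χ π : Equiv.Perm (Fin N)) :
    kendallDist σ π ≤ kendallDist σ χ + kendallDist χ π := by
  classical
  unfold kendallDist
  refine le_trans (Finset.card_le_card ?_) (Finset.card_union_le _ _)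
  intro p hp
  simp only [Finset.mem_filter, Finset.mem_union, Finset.mem_univ, true_and] at *
  obtain ⟨h12, hcase⟩ := hp
  have hne : χ p.1 ≠ χ p.2 := fun h => absurd (χ.injective h) (ne_of_lt h12)
  rcases lt_or_gt_of_ne hne with h | h
  · rcases hcase with ⟨a, b⟩ | ⟨a, b⟩
    · exact Or.inr ⟨h12, Or.inl ⟨h, b⟩⟩
    · exact Or.inl ⟨h12, Or.inr ⟨a, h⟩⟩
  · rcases hcase with ⟨a, b⟩ | ⟨a, b⟩
    · exact Or.inl ⟨h12, Or.inl ⟨a, h⟩⟩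
    · exact Or.inr ⟨h12, Or.inr ⟨h, b⟩⟩

/-- with `f′(A) = (1/|A|) Σ_{σ∈A} d_τ(c(A), σ)` for a Kemeny-central
choice `c(A)`, and `EI′(σ) = f′(S) − f′(S \ σ)`, if `S = {σ_1,…,σ_{M−2}, σ_ok, σ_bad}`
with `d_τ(σ*, σ_ok) < r`, `d_τ(σ*, σ_bad) > 3r`, and `d_τ(c(S \ σ), σ*) < r` for every
`σ ∈ S`, then `EI′(σ_bad) > EI′(σ_ok)`. -/
theorem empiricalInfluence_bad_gt_ok
    (N : ℕ) (r : ℝ) (hr : 0 < r)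
    (c : Multiset (Equiv.Perm (Fin N)) → Equiv.Perm (Fin N))
    (hc : ∀ A, IsKemenyCentral A (c A))
    (σstar σok σbad : Equiv.Perm (Fin N))
    (S : Multiset (Equiv.Perm (Fin N)))
    (hok : σok ∈ S) (hbad : σbad ∈ S) (hdiff : σok ≠ σbad)
    (hdok : (kendallDist σstar σok : ℝ) < r)
    (hdbad : (kendallDist σstar σbad : ℝ) > 3 * r)
    (hquality : ∀ σ ∈ S, (kendallDist (c (S.erase σ)) σstar : ℝ) < r)
    (f' : Multiset (Equiv.Perm (Fin N)) → ℝ)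
    (hf' : ∀ A, f' A = (((A.map (fun σ => kendallDist (c A) σ)).sum : ℕ) : ℝ) / A.card)
    (EI' : Equiv.Perm (Fin N) → ℝ)
    (hEI' : ∀ σ, EI' σ = f' S - f' (S.erase σ)) :
    EI' σok < EI' σbad := by
  classical
  have hok' : σok ∈ S.erase σbad := Multiset.mem_erase_of_ne hdiff |>.mpr hok
  have hbad' : σbad ∈ S.erase σok := (Multiset.mem_erase_of_ne (Ne.symm hdiff)).mpr hbad
  set co := c (S.erase σok) with hco
  set cb := c (S.erase σbad) with hcb
  set T := (S.erase σbad).erase σok with hT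
  have hSb : S.erase σbad = σok ::ₘ T := (Multiset.cons_erase hok').symm
  have hSo : S.erase σok = σbad ::ₘ T := by
    rw [hT, Multiset.erase_comm]
    exact (Multiset.cons_erase hbad').symm
  have hqok : (kendallDist co σstar : ℝ) < r := hquality σok hok
  have hqbad : (kendallDist cb σstar : ℝ) < r := hquality σbad hbad
  -- d(co, σok) < 2r
  have h1 : (kendallDist co σok : ℝ) < 2 * r := by
    have := kendallDist_triangle co σstar σok
    have := (Nat.cast_le (α := ℝ)).mpr this
    push_cast at this
    linarith
  -- d(co, σbad) > 2r
  have h2 : (kendallDist co σbad : ℝ) > 2 * r := by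
    have ht := kendallDist_triangle σstar co σbad
    have ht' := (Nat.cast_le (α := ℝ)).mpr ht
    push_cast at ht'
    rw [kendallDist_symm σstar co] at ht'
    linarith
  have hlt : kendallDist co σok < kendallDist co σbad := by
    exact_mod_cast h1.trans h2
  -- compare sums
  have hsum : ((S.erase σbad).map (fun σ => kendallDist cb σ)).sum <
      ((S.erase σok).map (fun σ => kendallDist co σ)).sum := by
    calc ((S.erase σbad).map (fun σ => kendallDist cb σ)).sum
        ≤ ((S.erase σbad).map (fun σ => kendallDist co σ)).sum := hc (S.erase σbad) co
      _ = kendallDist co σok + (T.map (fun σ => kendallDist co σ)).sum := by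
          rw [hSb, Multiset.map_cons, Multiset.sum_cons]
      _ < kendallDist co σbad + (T.map (fun σ => kendallDist co σ)).sum := by
          omega
      _ = ((S.erase σok).map (fun σ => kendallDist co σ)).sum := by
          rw [hSo, Multiset.map_cons, Multiset.sum_cons]
  have hcard : ((S.erase σbad).card : ℝ) = ((S.erase σok).card : ℝ) := by
    rw [Multiset.card_erase_of_mem hbad, Multiset.card_erase_of_mem hok]
  have hcardpos : (0 : ℝ) < ((S.erase σok).card : ℝ) := by
    have : 0 < (S.erase σok).card := Multiset.card_pos_iff_exists_mem.mpr ⟨σbad, hbad'⟩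
    exact_mod_cast this
  have hfs : f' (S.erase σbad) < f' (S.erase σok) := by
    rw [hf', hf', hcard]
    apply div_lt_div_of_pos_right _ hcardpos
    exact_mod_cast hsum
  rw [hEI', hEI']
  linarith
end

section
/- For any two permutations σ, π of {1, ..., N}, the Spearman footrule distance Σ_i |σ(i) − π(i)| and the Kendall tau distance d_τ(σ, π) satisfy d_τ(σ, π) ≤ Σ_i |σ(i) − π(i)| ≤ 2·d_τ(σ, π). -/
/-- Spearman footrule distance: `Σ_i |σ(i) − π(i)|`. -/
def footrule {N : ℕ} (σ π : Equiv.Perm (Fin N)) : ℕ :=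
  ∑ i : Fin N, ((σ i : ℤ) - (π i : ℤ)).natAbs

namespace DGaux

open Finset

variable {N : ℕ}

/-- disagreement predicate -/
def dis (σ π : Equiv.Perm (Fin N)) (i j : Fin N) : Prop :=
  (σ i < σ j ∧ π j < π i) ∨ (σ j < σ i ∧ π i < π j)

instance (σ π : Equiv.Perm (Fin N)) (i j : Fin N) : Decidable (dis σ π i j) := by
  unfold dis; infer_instance

lemma dis_comm (σ π : Equiv.Perm (Fin N)) (i j : Fin N) : dis σ π i j ↔ dis σ π j i := by
  unfold dis; tauto

lemma dis_ne {σ π : Equiv.Perm (Fin N)} {i j : Fin N} (h : dis σ π i j) : i ≠ j := by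
  rintro rfl; rcases h with ⟨h1, _⟩ | ⟨h1, _⟩ <;> exact absurd h1 (lt_irrefl _)

lemma perm_filter_lt_card (σ : Equiv.Perm (Fin N)) (x : Fin N) :
    (univ.filter fun j => σ j < x).card = (x : ℕ) := by
  have h : (univ.filter fun j => σ j < x) = (univ.filter fun v => v < x).map σ.symm.toEmbedding := by
    ext j
    simp only [mem_filter, mem_univ, true_and, mem_map, Equiv.coe_toEmbedding]
    constructor
    · intro h; exact ⟨σ j, by simpa using h, σ.symm_apply_apply j⟩
    · rintro ⟨v, hv, rfl⟩
      simpa using hv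
  rw [h, card_map, show (univ.filter fun v => v < x) = Finset.Iio x by ext v; simp]
  exact Fin.card_Iio x

/-- per-index bound: |σ i − π i| ≤ number of j disagreeing with i. -/
lemma natAbs_le_dis (σ π : Equiv.Perm (Fin N)) (i : Fin N) :
    ((σ i : ℤ) - (π i : ℤ)).natAbs ≤ (univ.filter fun j => dis σ π i j).card := by
  rcases lt_trichotomy (π i) (σ i) with hlt | heq | hgt
  · -- σ i > π i
    have hsplit : (univ.filter fun j => σ j < σ i)
        = (univ.filter fun j => σ j < σ i ∧ π j < π i)
          ∪ (univ.filter fun j => σ j < σ i ∧ π i < π j) := by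
      rw [← filter_or]
      apply filter_congr
      intro j _
      constructor
      · intro h
        have hne : j ≠ i := by rintro rfl; exact absurd h (lt_irrefl _)
        rcases lt_or_gt_of_ne (fun hc => hne (π.injective hc) : π j ≠ π i) with h2 | h2
        · exact Or.inl ⟨h, h2⟩
        · exact Or.inr ⟨h, h2⟩
      · rintro (⟨h, _⟩ | ⟨h, _⟩) <;> exact h
    have hdisj : Disjoint (univ.filter fun j => σ j < σ i ∧ π j < π i)
        (univ.filter fun j => σ j < σ i ∧ π i < π j) := by
      rw [disjoint_filter]
      rintro j _ ⟨_, h2⟩ ⟨_, h4⟩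
      exact absurd (h2.trans h4) (lt_irrefl _)
    have hcard : ((σ i : ℕ)) = (univ.filter fun j => σ j < σ i ∧ π j < π i).card
        + (univ.filter fun j => σ j < σ i ∧ π i < π j).card := by
      rw [← card_union_of_disjoint hdisj, ← hsplit, perm_filter_lt_card]
    have h1 : (univ.filter fun j => σ j < σ i ∧ π j < π i).card ≤ (π i : ℕ) := by
      rw [← perm_filter_lt_card π (π i)]
      apply card_le_card
      intro j hj
      simp only [mem_filter] at *
      exact ⟨hj.1, hj.2.2⟩
    have h2 : (univ.filter fun j => σ j < σ i ∧ π i < π j).card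
        ≤ (univ.filter fun j => dis σ π i j).card := by
      apply card_le_card
      intro j hj
      simp only [mem_filter] at *
      exact ⟨hj.1, Or.inr ⟨hj.2.1, hj.2.2⟩⟩
    have hfin : (π i : ℕ) < (σ i : ℕ) := hlt
    omega
  · simp [heq.symm ▸ (by omega : ((σ i : ℤ) - (σ i : ℤ)).natAbs = 0), heq]
  · -- π i > σ i : symmetric
    have hsplit : (univ.filter fun j => π j < π i)
        = (univ.filter fun j => π j < π i ∧ σ j < σ i)
          ∪ (univ.filter fun j => π j < π i ∧ σ i < σ j) := by
      rw [← filter_or]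
      apply filter_congr
      intro j _
      constructor
      · intro h
        have hne : j ≠ i := by rintro rfl; exact absurd h (lt_irrefl _)
        rcases lt_or_gt_of_ne (fun hc => hne (σ.injective hc) : σ j ≠ σ i) with h2 | h2
        · exact Or.inl ⟨h, h2⟩
        · exact Or.inr ⟨h, h2⟩
      · rintro (⟨h, _⟩ | ⟨h, _⟩) <;> exact h
    have hdisj : Disjoint (univ.filter fun j => π j < π i ∧ σ j < σ i)
        (univ.filter fun j => π j < π i ∧ σ i < σ j) := by
      rw [disjoint_filter]
      rintro j _ ⟨_, h2⟩ ⟨_, h4⟩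
      exact absurd (h2.trans h4) (lt_irrefl _)
    have hcard : ((π i : ℕ)) = (univ.filter fun j => π j < π i ∧ σ j < σ i).card
        + (univ.filter fun j => π j < π i ∧ σ i < σ j).card := by
      rw [← card_union_of_disjoint hdisj, ← hsplit, perm_filter_lt_card]
    have h1 : (univ.filter fun j => π j < π i ∧ σ j < σ i).card ≤ (σ i : ℕ) := by
      rw [← perm_filter_lt_card σ (σ i)]
      apply card_le_card
      intro j hj
      simp only [mem_filter] at *
      exact ⟨hj.1, hj.2.2⟩
    have h2 : (univ.filter fun j => π j < π i ∧ σ i < σ j).card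
        ≤ (univ.filter fun j => dis σ π i j).card := by
      apply card_le_card
      intro j hj
      simp only [mem_filter] at *
      exact ⟨hj.1, Or.inl ⟨hj.2.2, hj.2.1⟩⟩
    have hfin : (σ i : ℕ) < (π i : ℕ) := hgt
    omega


lemma card_pairs_eq_sum (σ π : Equiv.Perm (Fin N)) :
    (univ.filter fun p : Fin N × Fin N => dis σ π p.1 p.2).card
      = ∑ i : Fin N, (univ.filter fun j => dis σ π i j).card := by
  rw [card_eq_sum_card_fiberwise (f := Prod.fst) (t := univ) (fun p _ => mem_univ p.1)]
  refine Finset.sum_congr rfl fun i _ => ?_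
  have h : ((univ.filter fun p : Fin N × Fin N => dis σ π p.1 p.2).filter fun p => p.1 = i)
      = (univ.filter fun j => dis σ π i j).map
          ⟨fun j => (i, j), fun a b h => by simpa using h⟩ := by
    ext p
    simp only [mem_filter, mem_univ, true_and, mem_map, Function.Embedding.coeFn_mk]
    constructor
    · rintro ⟨hd, hi⟩
      exact ⟨p.2, by rw [← hi]; exact hd, by rw [← hi]; rfl⟩
    · rintro ⟨j, hj, rfl⟩
      exact ⟨hj, rfl⟩
  rw [h, card_map]

lemma card_pairs_eq_two_kendall (σ π : Equiv.Perm (Fin N)) :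
    (univ.filter fun p : Fin N × Fin N => dis σ π p.1 p.2).card = 2 * kendallDist σ π := by
  have hk : kendallDist σ π
      = (univ.filter fun p : Fin N × Fin N => p.1 < p.2 ∧ dis σ π p.1 p.2).card := by
    unfold kendallDist
    congr 1
  have hsplit : (univ.filter fun p : Fin N × Fin N => dis σ π p.1 p.2)
      = (univ.filter fun p : Fin N × Fin N => p.1 < p.2 ∧ dis σ π p.1 p.2)
        ∪ (univ.filter fun p : Fin N × Fin N => p.2 < p.1 ∧ dis σ π p.1 p.2) := by
    rw [← filter_or]
    apply filter_congr
    intro p _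
    constructor
    · intro h
      rcases lt_or_gt_of_ne (dis_ne h) with h1 | h1
      · exact Or.inl ⟨h1, h⟩
      · exact Or.inr ⟨h1, h⟩
    · rintro (⟨_, h⟩ | ⟨_, h⟩) <;> exact h
  have hdisj : Disjoint
      (univ.filter fun p : Fin N × Fin N => p.1 < p.2 ∧ dis σ π p.1 p.2)
      (univ.filter fun p : Fin N × Fin N => p.2 < p.1 ∧ dis σ π p.1 p.2) := by
    rw [disjoint_filter]
    rintro p _ ⟨h1, _⟩ ⟨h2, _⟩
    exact absurd (h1.trans h2) (lt_irrefl _)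
  have hswap : (univ.filter fun p : Fin N × Fin N => p.2 < p.1 ∧ dis σ π p.1 p.2).card
      = (univ.filter fun p : Fin N × Fin N => p.1 < p.2 ∧ dis σ π p.1 p.2).card := by
    apply Finset.card_bij' (fun p _ => Prod.swap p) (fun p _ => Prod.swap p)
    · intro p hp
      simp only [mem_filter, mem_univ, true_and] at *
      exact ⟨hp.1, (dis_comm σ π p.1 p.2).mp hp.2⟩
    · intro p hp
      simp only [mem_filter, mem_univ, true_and] at *
      exact ⟨hp.1, (dis_comm σ π p.1 p.2).mp hp.2⟩
    · intro p _; exact Prod.swap_swap p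
    · intro p _; exact Prod.swap_swap p
  rw [hsplit, card_union_of_disjoint hdisj, hswap, hk]
  ring

theorem footrule_le (σ π : Equiv.Perm (Fin N)) : footrule σ π ≤ 2 * kendallDist σ π := by
  unfold footrule
  calc ∑ i : Fin N, ((σ i : ℤ) - (π i : ℤ)).natAbs
      ≤ ∑ i : Fin N, (univ.filter fun j => dis σ π i j).card :=
        Finset.sum_le_sum fun i _ => natAbs_le_dis σ π i
    _ = (univ.filter fun p : Fin N × Fin N => dis σ π p.1 p.2).card :=
        (card_pairs_eq_sum σ π).symm
    _ = 2 * kendallDist σ π := card_pairs_eq_two_kendall σ π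


def Scut (σ π : Equiv.Perm (Fin N)) : Finset (Fin N × Fin N) :=
  univ.filter fun q : Fin N × Fin N => (π q.1 ≤ q.2 ∧ q.2 < σ q.1) ∨ (σ q.1 ≤ q.2 ∧ q.2 < π q.1)

lemma card_Scut (σ π : Equiv.Perm (Fin N)) : (Scut σ π).card = footrule σ π := by
  unfold Scut footrule
  rw [card_eq_sum_card_fiberwise (f := Prod.fst) (t := univ) (fun p _ => mem_univ p.1)]
  refine Finset.sum_congr rfl fun i _ => ?_
  have h : ((univ.filter fun q : Fin N × Fin N =>
        (π q.1 ≤ q.2 ∧ q.2 < σ q.1) ∨ (σ q.1 ≤ q.2 ∧ q.2 < π q.1)).filter fun q => q.1 = i)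
      = (univ.filter fun k : Fin N => (π i ≤ k ∧ k < σ i) ∨ (σ i ≤ k ∧ k < π i)).map
          ⟨fun k => (i, k), fun a b h => by simpa using h⟩ := by
    ext q
    simp only [mem_filter, mem_univ, true_and, mem_map, Function.Embedding.coeFn_mk]
    constructor
    · rintro ⟨hd, hi⟩
      exact ⟨q.2, by rw [← hi]; exact hd, by rw [← hi]; rfl⟩
    · rintro ⟨k, hk, rfl⟩
      exact ⟨hk, rfl⟩
  rw [h, card_map]
  have h2 : (univ.filter fun k : Fin N => (π i ≤ k ∧ k < σ i) ∨ (σ i ≤ k ∧ k < π i))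
      = Finset.Ico (π i) (σ i) ∪ Finset.Ico (σ i) (π i) := by
    ext k
    simp only [mem_filter, mem_univ, true_and, mem_union, Finset.mem_Ico]
  have hdisj : Disjoint (Finset.Ico (π i) (σ i)) (Finset.Ico (σ i) (π i)) := by
    rw [Finset.disjoint_left]
    intro k hk1 hk2
    rw [Finset.mem_Ico] at hk1 hk2
    exact absurd (lt_of_le_of_lt hk2.1 hk1.2) (lt_irrefl _)
  rw [h2, card_union_of_disjoint hdisj, Fin.card_Ico, Fin.card_Ico]
  omega

lemma kendall_eq_card_pi_sorted (σ π : Equiv.Perm (Fin N)) :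
    kendallDist σ π
      = (univ.filter fun p : Fin N × Fin N => π p.1 < π p.2 ∧ σ p.2 < σ p.1).card := by
  unfold kendallDist
  refine Finset.card_nbij' (fun p => if π p.1 < π p.2 then p else p.swap)
    (fun q => if q.1 < q.2 then q else q.swap) ?_ ?_ ?_ ?_
  · rintro ⟨a, b⟩ hp
    simp only [Finset.mem_coe, mem_filter, mem_univ, true_and] at hp ⊢
    by_cases hc : π a < π b
    · rw [if_pos hc]
      rcases hp.2 with ⟨_, h2⟩ | ⟨h1, _⟩
      · exact absurd (h2.trans hc) (lt_irrefl _)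
      · exact ⟨hc, h1⟩
    · rw [if_neg hc]
      have hne : π a ≠ π b := fun hc2 => absurd (π.injective hc2) (ne_of_lt hp.1)
      have hgt : π b < π a := lt_of_le_of_ne (not_lt.mp hc) hne.symm
      rcases hp.2 with ⟨h1, _⟩ | ⟨_, h2⟩
      · exact ⟨hgt, h1⟩
      · exact absurd (h2.trans hgt) (lt_irrefl _)
  · rintro ⟨a, b⟩ hq
    simp only [Finset.mem_coe, mem_filter, mem_univ, true_and] at hq ⊢
    by_cases hc : a < b
    · rw [if_pos hc]
      exact ⟨hc, Or.inr ⟨hq.2, hq.1⟩⟩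
    · rw [if_neg hc]
      have hne : a ≠ b := fun hc2 => absurd (hc2 ▸ hq.1) (lt_irrefl _)
      have hgt : b < a := lt_of_le_of_ne (not_lt.mp hc) hne.symm
      exact ⟨hgt, Or.inl ⟨hq.2, hq.1⟩⟩
  · rintro ⟨a, b⟩ hp
    simp only [Finset.mem_coe, mem_filter, mem_univ, true_and] at hp
    dsimp only
    by_cases hc : π a < π b
    · rw [if_pos hc]
      dsimp only
      rw [if_pos hp.1]
    · rw [if_neg hc]
      show (if (b, a).1 < (b, a).2 then (b, a) else (b, a).swap) = (a, b)
      dsimp only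
      rw [if_neg (asymm hp.1), Prod.swap_prod_mk]
  · rintro ⟨a, b⟩ hq
    simp only [Finset.mem_coe, mem_filter, mem_univ, true_and] at hq
    dsimp only
    by_cases hc : a < b
    · rw [if_pos hc]
      dsimp only
      rw [if_pos hq.1]
    · rw [if_neg hc]
      show (if π (b, a).1 < π (b, a).2 then (b, a) else (b, a).swap) = (a, b)
      dsimp only
      rw [if_neg (asymm hq.1), Prod.swap_prod_mk]

lemma kendall_le_footrule (σ π : Equiv.Perm (Fin N)) :
    kendallDist σ π ≤ footrule σ π := by
  rw [← card_Scut σ π, kendall_eq_card_pi_sorted]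
  apply Finset.card_le_card_of_injOn
    (fun p => if π p.1 ≤ σ p.2 then (p.1, σ p.2) else (p.2, π p.1))
  · intro p hp
    simp only [Finset.mem_coe, mem_filter, mem_univ, true_and] at hp
    unfold Scut
    by_cases hc : π p.1 ≤ σ p.2
    · simp only [if_pos hc]
      simp only [Finset.mem_coe, mem_filter, mem_univ, true_and]
      exact Or.inl ⟨hc, hp.2⟩
    · simp only [if_neg hc]
      simp only [Finset.mem_coe, mem_filter, mem_univ, true_and]
      exact Or.inr ⟨le_of_lt (not_le.mp hc), hp.1⟩
  · intro p hp p' hp' heq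
    simp only [coe_filter, Set.mem_setOf_eq, mem_univ, true_and] at hp hp'
    simp only at heq
    by_cases hc : π p.1 ≤ σ p.2 <;> by_cases hc' : π p'.1 ≤ σ p'.2
    · rw [if_pos hc, if_pos hc'] at heq
      rw [Prod.mk.injEq] at heq
      obtain ⟨h1, h2⟩ := heq
      exact Prod.ext h1 (σ.injective h2)
    · rw [if_pos hc, if_neg hc'] at heq
      rw [Prod.mk.injEq] at heq
      obtain ⟨h1, h2⟩ := heq
      exfalso
      have : π p'.1 < π p'.2 := hp'.1
      rw [← h1, ← h2] at this
      exact absurd (lt_of_le_of_lt hc this) (lt_irrefl _)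
    · rw [if_neg hc, if_pos hc'] at heq
      rw [Prod.mk.injEq] at heq
      obtain ⟨h1, h2⟩ := heq
      exfalso
      have : π p.1 < π p.2 := hp.1
      rw [h2, h1] at this
      exact absurd (lt_of_le_of_lt hc' this) (lt_irrefl _)
    · rw [if_neg hc, if_neg hc'] at heq
      rw [Prod.mk.injEq] at heq
      obtain ⟨h1, h2⟩ := heq
      exact Prod.ext (π.injective h2) h1

end DGaux

/-- Diaconis–Graham inequality:
`d_τ(σ, π) ≤ Σ_i |σ(i) − π(i)| ≤ 2·d_τ(σ, π)`. -/
theorem diaconis_graham (N : ℕ) (σ π : Equiv.Perm (Fin N)) :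
    kendallDist σ π ≤ footrule σ π ∧ footrule σ π ≤ 2 * kendallDist σ π := by
  exact ⟨DGaux.kendall_le_footrule σ π, DGaux.footrule_le σ π⟩
end
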